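/- arXiv:2403.10995 — 3 statements merged into one kernel-verified Lean document; each statement's English description precedes it below -/
import Mathlib

section
/- (Lemma 1) Let n ≥ 2 and let A, A' be symmetric matrices in {0,1}^{n×n} that are adjacent, i.e., there exist indices i ≠ j such that A and A' agree at every entry except (i,j) and (j,i), where A_{ij} = A_{ji} = 1 and A'_{ij} = A'_{ji} = 0. Suppose A and A' share principal bases: there exist orthogonal n×n matrices U, V and vectors s, s' ∈ ℝⁿ with A = U · diag(s) · V and A' = U · diag(s') · V. Then for every r with 1 ≤ r ≤ n, the truncated singular-value sensitivity satisfies √(Σ_{i=1}^r (s_i − s'_i)²) ≤ √2. -/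
/-!
The difference `A - A' = U * diagonal (s - s') * V` has exactly two nonzero entries, both equal
to `1`, so its squared Frobenius norm `trace ((A - A')ᵀ * (A - A'))` is `2`. Orthogonal factors
leave this quantity unchanged, so it also equals `∑ k, (s k - s' k) ^ 2`, and any partial sum of
these squares is at most `2`.
-/

open Matrix

namespace Matrix

theorem sub_eq_single_add_single {n R : Type*} [DecidableEq n] [AddGroup R]
    {A A' : Matrix n n R} {i j : n} (hij : i ≠ j)
    (hagree : ∀ k l : n, ¬(k = i ∧ l = j) → ¬(k = j ∧ l = i) → A k l = A' k l) :
    A - A' = single i j (A i j - A' i j) + single j i (A j i - A' j i) := by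
  ext k l
  by_cases hkl : k = i ∧ l = j
  · obtain ⟨rfl, rfl⟩ := hkl
    simp [hij]
  by_cases hlk : k = j ∧ l = i
  · obtain ⟨rfl, rfl⟩ := hlk
    simp [hij]
  have hkl' : ¬(i = k ∧ j = l) := fun ⟨hik, hjl⟩ => hkl ⟨hik.symm, hjl.symm⟩
  have hlk' : ¬(j = k ∧ i = l) := fun ⟨hjk, hil⟩ => hlk ⟨hjk.symm, hil.symm⟩
  simp [hagree k l hkl hlk, hkl', hlk']

variable {m n R : Type*} [Fintype m] [Fintype n] [DecidableEq m] [DecidableEq n] [CommSemiring R]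

theorem trace_transpose_mul_self_mul_mul_of_orthogonal {U : Matrix m m R} {V : Matrix n n R}
    (hU : Uᵀ * U = 1) (hV : V * Vᵀ = 1) (M : Matrix m n R) :
    ((U * M * V)ᵀ * (U * M * V)).trace = (Mᵀ * M).trace := by
  simp only [transpose_mul, Matrix.mul_assoc]
  rw [← Matrix.mul_assoc Uᵀ U, hU, Matrix.one_mul, trace_mul_comm, Matrix.mul_assoc,
    Matrix.mul_assoc, hV, Matrix.mul_one]

theorem trace_transpose_mul_self_diagonal (t : n → R) :
    ((diagonal t)ᵀ * diagonal t).trace = ∑ k, t k ^ 2 := by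
  simp [diagonal_mul_diagonal, sq]

theorem trace_transpose_mul_self_single_add_single {i j : n} (hij : i ≠ j) (a b : R) :
    ((single i j a + single j i b)ᵀ * (single i j a + single j i b)).trace = a ^ 2 + b ^ 2 := by
  simp [transpose_single, add_mul, mul_add, hij, hij.symm, sq]

end Matrix

theorem truncated_singular_value_sensitivity_general (n : ℕ)
    (A A' : Matrix (Fin n) (Fin n) ℝ)
    (i j : Fin n) (hij : i ≠ j)
    (hAij : A i j = 1) (hAji : A j i = 1)
    (hA'ij : A' i j = 0) (hA'ji : A' j i = 0)
    (hagree : ∀ k l : Fin n, ¬(k = i ∧ l = j) → ¬(k = j ∧ l = i) → A k l = A' k l)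
    (U V : Matrix (Fin n) (Fin n) ℝ) (s s' : Fin n → ℝ)
    (hU : Uᵀ * U = 1)
    (hV' : V * Vᵀ = 1)
    (hA : A = U * Matrix.diagonal s * V)
    (hA' : A' = U * Matrix.diagonal s' * V) :
    ∀ r : ℕ, 1 ≤ r → r ≤ n →
      Real.sqrt (∑ i ∈ Finset.univ.filter (fun i : Fin n => (i : ℕ) < r),
          (s i - s' i) ^ 2)
        ≤ Real.sqrt 2 := by
  intro r _ _
  have hdiff : A - A' = U * diagonal (s - s') * V := by
    rw [hA, hA', ← Matrix.sub_mul, ← Matrix.mul_sub, diagonal_sub]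
    rfl
  have htotal : ∑ k, (s k - s' k) ^ 2 = 2 := by
    have h := trace_transpose_mul_self_mul_mul_of_orthogonal hU hV' (diagonal (s - s'))
    rw [← hdiff, sub_eq_single_add_single hij hagree,
      trace_transpose_mul_self_single_add_single hij, trace_transpose_mul_self_diagonal,
      hAij, hAji, hA'ij, hA'ji] at h
    simpa [one_add_one_eq_two] using h.symm
  gcongr
  calc ∑ k ∈ Finset.univ.filter (fun k : Fin n => (k : ℕ) < r), (s k - s' k) ^ 2
      ≤ ∑ k, (s k - s' k) ^ 2 :=
        Finset.sum_le_sum_of_subset_of_nonneg (Finset.filter_subset _ _)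
          fun k _ _ => sq_nonneg _
    _ = 2 := htotal

/-- **Lemma 1.** For adjacent symmetric 0–1 matrices `A, A'` sharing
principal bases `A = U * diagonal s * V`, `A' = U * diagonal s' * V` with `U, V`
orthogonal, the truncated singular-value sensitivity over the top `r` singular
values is at most `√2`, for every `1 ≤ r ≤ n`. -/
theorem truncated_singular_value_sensitivity (n : ℕ) (hn : 2 ≤ n)
    (A A' : Matrix (Fin n) (Fin n) ℝ)
    (hA01 : ∀ k l, A k l = 0 ∨ A k l = 1)
    (hA'01 : ∀ k l, A' k l = 0 ∨ A' k l = 1)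
    (hAsymm : A.IsSymm) (hA'symm : A'.IsSymm)
    (i j : Fin n) (hij : i ≠ j)
    (hAij : A i j = 1) (hAji : A j i = 1)
    (hA'ij : A' i j = 0) (hA'ji : A' j i = 0)
    (hagree : ∀ k l : Fin n, ¬(k = i ∧ l = j) → ¬(k = j ∧ l = i) → A k l = A' k l)
    (U V : Matrix (Fin n) (Fin n) ℝ) (s s' : Fin n → ℝ)
    (hU : Uᵀ * U = 1) (hU' : U * Uᵀ = 1)
    (hV : Vᵀ * V = 1) (hV' : V * Vᵀ = 1)
    (hA : A = U * Matrix.diagonal s * V)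
    (hA' : A' = U * Matrix.diagonal s' * V) :
    ∀ r : ℕ, 1 ≤ r → r ≤ n →
      Real.sqrt (∑ i ∈ Finset.univ.filter (fun i : Fin n => (i : ℕ) < r),
          (s i - s' i) ^ 2)
        ≤ Real.sqrt 2 :=
  truncated_singular_value_sensitivity_general n A A' i j hij hAij hAji hA'ij hA'ji hagree U V s s'
    hU hV' hA hA'
end

section
/- (One-dimensional Gaussian mechanism) Let Δ > 0, let 0 < ε < 1 and 0 < δ < 1, and set σ = Δ·√(2·ln(1.25/δ))/ε. Let x, x' ∈ ℝ with |x − x'| ≤ Δ. Then for every measurable set S ⊆ ℝ, the Gaussian measures with means x and x' and variance σ² satisfy N(x, σ²)(S) ≤ e^ε · N(x', σ²)(S) + δ. -/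
open MeasureTheory ProbabilityTheory Real Set
open scoped NNReal ENNReal

lemma gauss_map_reflect (m : ℝ) (v : ℝ≥0) :
    (gaussianReal m v).map (fun t => 2*m - t) = gaussianReal m v := by
  have h1 : (fun t : ℝ => 2*m - t) = (fun t => t + 2*m) ∘ (fun t => (-1) * t) := by
    funext t; simp; ring
  rw [h1, ← Measure.map_map (g := fun t : ℝ => t + 2*m) (f := fun t : ℝ => (-1) * t)
    (measurable_id.add_const _) (measurable_id.const_mul _),
    gaussianReal_map_const_mul (-1)]
  have h2 : (⟨(-1:ℝ)^2, sq_nonneg _⟩ : ℝ≥0) = 1 := by ext; norm_num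
  rw [gaussianReal_map_add_const]
  congr 1
  · ring
  · ext; simp

lemma gauss_reflect_apply (m : ℝ) (v : ℝ≥0) (r : ℝ) :
    gaussianReal m v (Set.Iio (m - r)) = gaussianReal m v (Set.Ioi (m + r)) := by
  conv_lhs => rw [← gauss_map_reflect m v]
  rw [Measure.map_apply (show Measurable fun t : ℝ => 2*m - t by fun_prop) measurableSet_Iio]
  congr 1
  ext t
  simp only [Set.mem_preimage, Set.mem_Iio, Set.mem_Ioi]
  constructor <;> intro h <;> linarith

lemma gauss_half (m : ℝ) {v : ℝ≥0} (hv : v ≠ 0) :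
    gaussianReal m v (Set.Ioi m) = 1/2 := by
  set μ := gaussianReal m v with hμ
  have hrefl : μ (Set.Iio m) = μ (Set.Ioi m) := by
    have := gauss_reflect_apply m v 0
    simpa using this
  have hsing : μ {m} = 0 := by
    refine gaussianReal_absolutelyContinuous m hv ?_
    simp
  have hsum : μ (Set.Iio m) + μ (Set.Ioi m) = 1 := by
    have hdisj : Disjoint (Set.Iio m) (Set.Ioi m) := by
      rw [Set.disjoint_iff]
      intro t ⟨h1, h2⟩
      exact absurd (lt_trans h1 h2) (lt_irrefl t)
    have h := measure_union (μ := μ) hdisj measurableSet_Ioi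
    rw [← h]
    have hcompl : Set.Iio m ∪ Set.Ioi m = {m}ᶜ := by
      ext t
      simp only [Set.mem_union, Set.mem_Iio, Set.mem_Ioi, Set.mem_compl_iff,
        Set.mem_singleton_iff]
      exact lt_or_lt_iff_ne
    rw [hcompl, measure_compl (measurableSet_singleton m) (measure_ne_top μ _), hsing]
    simp
  rw [hrefl, ← two_mul] at hsum
  rw [ENNReal.eq_div_iff (by norm_num) (by norm_num)]
  exact hsum

lemma gauss_half_real (m : ℝ) {v : ℝ≥0} (hv : v ≠ 0) :
    ∫ t in Set.Ioi m, gaussianPDFReal m v t = 1/2 := by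
  have h := gauss_half m hv
  rw [gaussianReal_apply_eq_integral m hv] at h
  have hnn : 0 ≤ ∫ t in Set.Ioi m, gaussianPDFReal m v t :=
    setIntegral_nonneg measurableSet_Ioi fun t _ => gaussianPDFReal_nonneg m v t
  have : (1:ℝ≥0∞)/2 = ENNReal.ofReal (1/2) := by
    rw [ENNReal.ofReal_div_of_pos] <;> norm_num
  rw [this, ENNReal.ofReal_eq_ofReal_iff hnn (by norm_num)] at h
  exact h

lemma gauss_tail (m : ℝ) {v : ℝ≥0} (hv : v ≠ 0) {r : ℝ} (hr : 0 ≤ r) :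
    gaussianReal m v (Set.Ioi (m + r)) ≤ ENNReal.ofReal (Real.exp (-(r^2) / (2*v)) / 2) := by
  rw [gaussianReal_apply_eq_integral m hv]
  apply ENNReal.ofReal_le_ofReal
  have hv0 : (0:ℝ) < v := lt_of_le_of_ne v.coe_nonneg (by exact_mod_cast hv.symm)
  have key : ∀ t ∈ Set.Ioi (m + r), gaussianPDFReal m v t
      ≤ Real.exp (-(r^2) / (2*v)) * gaussianPDFReal (m + r) v t := by
    intro t ht
    simp only [Set.mem_Ioi] at ht
    unfold gaussianPDFReal
    have h : rexp (-(t - m)^2 / (2*(v:ℝ)))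
        ≤ rexp (-(r^2) / (2*(v:ℝ))) * rexp (-(t - (m+r))^2 / (2*(v:ℝ))) := by
      rw [← Real.exp_add, Real.exp_le_exp, ← add_div]
      have hnum : -(t - m)^2 ≤ -(r^2) + -(t - (m+r))^2 := by nlinarith
      have h2v : (0:ℝ) < 2*(v:ℝ) := by positivity
      exact (div_le_div_iff_of_pos_right h2v).mpr hnum
    calc (Real.sqrt (2 * π * v))⁻¹ * rexp (-(t - m)^2 / (2*(v:ℝ)))
        ≤ (Real.sqrt (2 * π * v))⁻¹
            * (rexp (-(r^2) / (2*(v:ℝ))) * rexp (-(t - (m+r))^2 / (2*(v:ℝ)))) :=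
          mul_le_mul_of_nonneg_left h (by positivity)
      _ = _ := by ring
  calc ∫ t in Set.Ioi (m+r), gaussianPDFReal m v t
      ≤ ∫ t in Set.Ioi (m+r), Real.exp (-(r^2) / (2*v)) * gaussianPDFReal (m+r) v t := by
        apply setIntegral_mono_on
          ((integrable_gaussianPDFReal m v).restrict)
          (((integrable_gaussianPDFReal (m+r) v).restrict).const_mul _)
          measurableSet_Ioi key
    _ = Real.exp (-(r^2) / (2*v)) * ∫ t in Set.Ioi (m+r), gaussianPDFReal (m+r) v t := by
        rw [integral_const_mul]
    _ = Real.exp (-(r^2) / (2*v)) / 2 := by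
        rw [gauss_half_real (m+r) hv]; ring

lemma gauss_interval (m b : ℝ) {v : ℝ≥0} (hv : v ≠ 0) (hb : b ≤ m) :
    gaussianReal m v (Set.Ioc b m) ≤ ENNReal.ofReal ((m - b) * (Real.sqrt (2 * π * v))⁻¹) := by
  rw [gaussianReal_apply_eq_integral m hv]
  apply ENNReal.ofReal_le_ofReal
  have hv0 : (0:ℝ) < v := lt_of_le_of_ne v.coe_nonneg (by exact_mod_cast hv.symm)
  calc ∫ t in Set.Ioc b m, gaussianPDFReal m v t
      ≤ ∫ _t in Set.Ioc b m, (Real.sqrt (2 * π * v))⁻¹ := by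
        apply setIntegral_mono_on ((integrable_gaussianPDFReal m v).restrict)
          (integrableOn_const (by rw [Real.volume_Ioc]; exact ENNReal.ofReal_ne_top))
          measurableSet_Ioc
        intro t _
        unfold gaussianPDFReal
        have : Real.exp (-(t - m)^2 / (2*v)) ≤ 1 := by
          rw [Real.exp_le_one_iff]
          apply div_nonpos_of_nonpos_of_nonneg (neg_nonpos.2 (sq_nonneg _)) (by positivity)
        nlinarith [Real.sqrt_nonneg (2 * π * v), inv_nonneg.2 (Real.sqrt_nonneg (2 * π * v))]
    _ = (m - b) * (Real.sqrt (2 * π * v))⁻¹ := by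
        rw [setIntegral_const, measureReal_def, Real.volume_Ioc, smul_eq_mul,
          ENNReal.toReal_ofReal (by linarith)]


set_option maxHeartbeats 2000000 in
/-- **one-dimensional Gaussian mechanism.** With
`σ = Δ·√(2·ln(1.25/δ))/ε` and `|x − x'| ≤ Δ`, the Gaussian measures with means
`x, x'` and variance `σ²` are `(ε, δ)`-indistinguishable. -/
theorem gaussian_mechanism_one_dim (Δ ε δ : ℝ)
    (hΔ : 0 < Δ) (hε0 : 0 < ε) (hε1 : ε < 1) (hδ0 : 0 < δ) (hδ1 : δ < 1)
    (σ : ℝ) (hσ : σ = Δ * Real.sqrt (2 * Real.log (1.25 / δ)) / ε)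
    (x x' : ℝ) (hxx' : |x - x'| ≤ Δ)
    (S : Set ℝ) (hS : MeasurableSet S) :
    gaussianReal x (Real.toNNReal (σ ^ 2)) S
      ≤ ENNReal.ofReal (Real.exp ε) * gaussianReal x' (Real.toNNReal (σ ^ 2)) S
        + ENNReal.ofReal δ := by
  rw [show (1.25:ℝ) = 5/4 by norm_num] at hσ
  have h125 : (1:ℝ) < 5/4/δ := (one_lt_div hδ0).2 (by linarith)
  have hL : 0 < Real.log (5/4/δ) := Real.log_pos h125
  set L := Real.log (5/4/δ) with hLdef
  set c := Real.sqrt (2*L) with hcdef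
  have hc2 : c^2 = 2*L := Real.sq_sqrt (by linarith)
  have hc0 : 0 < c := Real.sqrt_pos.2 (by linarith)
  clear_value c
  have hσ0 : 0 < σ := by rw [hσ]; exact div_pos (mul_pos hΔ hc0) hε0
  have hσc : σ * ε = Δ * c := by rw [hσ]; field_simp
  set v : ℝ≥0 := Real.toNNReal (σ^2) with hvdef
  have hvr : (v:ℝ) = σ^2 := Real.coe_toNNReal _ (sq_nonneg σ)
  clear_value v
  have hv0 : (0:ℝ) < v := by rw [hvr]; positivity
  have hv : v ≠ 0 := by
    intro h
    rw [h] at hv0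
    simp at hv0
  have hexpε : 1 ≤ ENNReal.ofReal (Real.exp ε) := by
    rw [← ENNReal.ofReal_one]
    exact ENNReal.ofReal_le_ofReal (Real.one_le_exp hε0.le)
  set a := x - x' with hadef
  clear_value a
  by_cases ha : a = 0
  · have hxx : x = x' := by rw [ha] at hadef; linarith
    rw [hxx]
    exact le_add_right (le_mul_of_one_le_left zero_le hexpε)
  have hx'eq : x' = x - a := by rw [hadef]; ring
  -- main case
  set B : Set ℝ := {t | σ^2*ε - a^2/2 < a*(t - x)} with hBdef
  have hBmeas : MeasurableSet B :=
    measurableSet_lt measurable_const (by fun_prop)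
  clear_value B
  have hpt : ∀ t, t ∉ B → gaussianPDFReal x v t ≤ Real.exp ε * gaussianPDFReal x' v t := by
    intro t ht
    rw [hBdef] at ht
    simp only [Set.mem_setOf_eq, not_lt] at ht
    unfold gaussianPDFReal
    have h2 : (0:ℝ) < 2*σ^2 := by positivity
    have h : rexp (-(t-x)^2 / (2*(v:ℝ))) ≤ Real.exp ε * rexp (-(t-x')^2/(2*(v:ℝ))) := by
      rw [← Real.exp_add, Real.exp_le_exp, hvr]
      have hsub : -(t-x)^2/(2*σ^2) - (-(t-x')^2/(2*σ^2)) ≤ ε := by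
        rw [div_sub_div_same, div_le_iff₀ h2, hx'eq]
        nlinarith [ht]
      linarith
    calc (Real.sqrt (2 * π * v))⁻¹ * rexp (-(t - x)^2 / (2*(v:ℝ)))
        ≤ (Real.sqrt (2 * π * v))⁻¹ * (Real.exp ε * rexp (-(t - x')^2 / (2*(v:ℝ)))) :=
          mul_le_mul_of_nonneg_left h (by positivity)
      _ = _ := by ring
  have hsplit : gaussianReal x v S ≤ gaussianReal x v (S \ B) + gaussianReal x v B := by
    calc gaussianReal x v S = gaussianReal x v ((S \ B) ∪ (S ∩ B)) := by
          rw [Set.diff_union_inter]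
      _ ≤ gaussianReal x v (S \ B) + gaussianReal x v (S ∩ B) := measure_union_le _ _
      _ ≤ _ := add_le_add le_rfl (measure_mono Set.inter_subset_right)
  have hmain : gaussianReal x v (S \ B) ≤ ENNReal.ofReal (Real.exp ε) * gaussianReal x' v S := by
    rw [gaussianReal_apply x hv, gaussianReal_apply x' hv]
    calc ∫⁻ t in S \ B, gaussianPDF x v t
        ≤ ∫⁻ t in S \ B, ENNReal.ofReal (Real.exp ε) * gaussianPDF x' v t := by
          apply setLIntegral_mono ((measurable_gaussianPDF x' v).const_mul _)
          intro t ht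
          unfold gaussianPDF
          rw [← ENNReal.ofReal_mul (Real.exp_nonneg ε)]
          exact ENNReal.ofReal_le_ofReal (hpt t ht.2)
      _ = ENNReal.ofReal (Real.exp ε) * ∫⁻ t in S \ B, gaussianPDF x' v t :=
          lintegral_const_mul _ (measurable_gaussianPDF x' v)
      _ ≤ ENNReal.ofReal (Real.exp ε) * ∫⁻ t in S, gaussianPDF x' v t := by
          gcongr
          exact Set.diff_subset
  -- tail bound
  set r₀ : ℝ := σ*c - Δ/2 with hr₀def
  clear_value r₀
  have hΔc : Δ = σ*ε/c := by field_simp; linarith [hσc]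
  have hs2 : σ^2*ε = σ*Δ*c := by rw [sq, mul_assoc, hσc]; ring
  have hσc2 : σ^2*c^2 = σ^2*(2*L) := by rw [hc2]
  have hT : gaussianReal x v (Set.Ioi (x + r₀)) ≤ ENNReal.ofReal δ := by
    rcases le_or_gt 0 r₀ with hr | hr
    · refine le_trans (gauss_tail x hv hr) (ENNReal.ofReal_le_ofReal ?_)
      -- exp(-r₀²/(2σ²))/2 ≤ δ
      have h1 : σ^2*(2*L - ε) ≤ r₀^2 := by
        have hexp : r₀^2 = σ^2*c^2 - σ*c*Δ + Δ^2/4 := by rw [hr₀def]; ring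
        have hcd : σ*c*Δ = σ^2*ε := by rw [hs2]; ring
        nlinarith [sq_nonneg Δ]
      have h2 : L - ε/2 ≤ r₀^2/(2*(v:ℝ)) := by
        rw [hvr, le_div_iff₀ (by positivity)]
        nlinarith [h1]
      have hexpL : Real.exp L = 5/4/δ := by
        rw [hLdef]; exact Real.exp_log (by linarith)
      have h3 : Real.exp (-(r₀^2) / (2*(v:ℝ))) ≤ Real.exp (ε/2) * ((4/5)*δ) := by
        have hmono : Real.exp (-(r₀^2)/(2*(v:ℝ))) ≤ Real.exp (ε/2 - L) := by
          apply Real.exp_le_exp.2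
          rw [neg_div]
          linarith
        have heq : Real.exp (ε/2 - L) = Real.exp (ε/2) * ((4/5)*δ) := by
          rw [Real.exp_sub, hexpL]
          field_simp
        rw [heq] at hmono
        exact hmono
      have h4 : Real.exp (ε/2) < 5/2 := by
        have ha1 : Real.exp (ε/2) ≤ Real.exp (1/2) := Real.exp_le_exp.2 (by linarith)
        have ha2 : Real.exp (1/2) * Real.exp (1/2) = Real.exp 1 := by
          rw [← Real.exp_add]; norm_num
        have ha3 : Real.exp 1 < 68/25 := lt_trans Real.exp_one_lt_d9 (by norm_num)
        nlinarith [Real.exp_pos (1/2), Real.exp_pos (ε/2)]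
      nlinarith [Real.exp_pos (-(r₀^2)/(2*(v:ℝ))),
        mul_le_mul_of_nonneg_right h4.le (by positivity : (0:ℝ) ≤ δ/1.25)]
    · -- negative threshold case
      have hsplit2 : Set.Ioi (x + r₀) ⊆ Set.Ioc (x + r₀) x ∪ Set.Ioi x := by
        intro t ht
        simp only [Set.mem_Ioi] at ht
        rcases le_or_gt t x with h | h
        · exact Or.inl ⟨ht, h⟩
        · exact Or.inr h
      have hm : gaussianReal x v (Set.Ioi (x + r₀))
          ≤ ENNReal.ofReal ((x - (x + r₀)) * (Real.sqrt (2 * π * v))⁻¹) + 1/2 := by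
        calc gaussianReal x v (Set.Ioi (x + r₀))
            ≤ gaussianReal x v (Set.Ioc (x + r₀) x ∪ Set.Ioi x) := measure_mono hsplit2
          _ ≤ gaussianReal x v (Set.Ioc (x + r₀) x) + gaussianReal x v (Set.Ioi x) :=
              measure_union_le _ _
          _ ≤ _ := by
              rw [gauss_half x hv]
              exact add_le_add (gauss_interval x (x + r₀) hv (by linarith)) le_rfl
      refine le_trans hm ?_
      have hhalf : (1:ℝ≥0∞)/2 = ENNReal.ofReal (1/2) := by
        rw [ENNReal.ofReal_div_of_pos] <;> norm_num
      have hr₀nn : 0 ≤ x - (x + r₀) := by linarith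
      rw [hhalf, ← ENNReal.ofReal_add
        (mul_nonneg hr₀nn (inv_nonneg.2 (Real.sqrt_nonneg _))) (by norm_num)]
      apply ENNReal.ofReal_le_ofReal
      -- key real facts
      have hcc : c^2 < ε/2 := by
        have h6 : σ*c < σ*ε/c/2 := by rw [← hΔc]; linarith
        have h7 : σ*c*c < σ*ε/c/2*c := mul_lt_mul_of_pos_right h6 hc0
        have h8 : σ*ε/c/2*c = σ*ε/2 := by field_simp
        rw [h8] at h7
        nlinarith [hσ0]
      have hLle : L < 1/4 := by nlinarith [hc2]
      have he4 : Real.exp (1/4 : ℝ) < 2 := by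
        have hmul : Real.exp (1/4:ℝ) * Real.exp (1/4:ℝ) * Real.exp (1/4:ℝ) * Real.exp (1/4:ℝ)
            = Real.exp 1 := by
          rw [← Real.exp_add, ← Real.exp_add, ← Real.exp_add]; norm_num
        nlinarith [Real.exp_pos (1/4:ℝ), lt_trans Real.exp_one_lt_d9 (show (2.7182818286:ℝ) < 68/25 by norm_num),
          sq_nonneg (Real.exp (1/4:ℝ) - 2), sq_nonneg (Real.exp (1/4:ℝ) * Real.exp (1/4:ℝ) - 4),
          sq_nonneg (Real.exp (1/4:ℝ) + 2)]
      have hδlb : 5/8 ≤ δ := by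
        have hδeq : δ = 5/4 * Real.exp (-L) := by
          rw [Real.exp_neg, hLdef, Real.exp_log (by linarith : (0:ℝ) < 5/4/δ)]
          field_simp
        have hm1 : Real.exp (-(1/4) : ℝ) ≤ Real.exp (-L) := Real.exp_le_exp.2 (by linarith)
        have hm2 : Real.exp (-(1/4) : ℝ) * Real.exp (1/4 : ℝ) = 1 := by
          rw [← Real.exp_add]; norm_num
        have hm3 : (1/2 : ℝ) ≤ Real.exp (-(1/4) : ℝ) := by
          nlinarith [Real.exp_pos (-(1/4):ℝ), he4]
        nlinarith [hm1, hm3]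
      have hclb : 2/5 ≤ c^2 := by
        have h8 : Real.log (4/5:ℝ) ≤ 4/5 - 1 := Real.log_le_sub_one_of_pos (by norm_num)
        have hinv : Real.log (5/4:ℝ) = - Real.log (4/5) := by
          rw [← Real.log_inv]; norm_num
        have hLlb : Real.log (5/4:ℝ) ≤ L := by
          rw [hLdef]
          apply Real.log_le_log (by norm_num)
          rw [le_div_iff₀ hδ0]; nlinarith
        nlinarith [hc2]
      have hsqrt : 5/2*σ ≤ Real.sqrt (2*π*(v:ℝ)) := by
        have h625 : (25/4:ℝ)*σ^2 ≤ 2*π*(v:ℝ) := by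
          rw [hvr]
          nlinarith [lt_trans (show (25/8:ℝ) < 3.141592 by norm_num) Real.pi_gt_d6, sq_nonneg σ]
        calc 5/2*σ = Real.sqrt ((5/2*σ)^2) := (Real.sqrt_sq (by positivity)).symm
          _ ≤ _ := by
              apply Real.sqrt_le_sqrt
              nlinarith [h625]
      have hsqrtpos : 0 < Real.sqrt (2*π*(v:ℝ)) := lt_of_lt_of_le (by positivity) hsqrt
      have hinv2 : (Real.sqrt (2*π*(v:ℝ)))⁻¹ ≤ (5/2*σ)⁻¹ := by
        apply inv_anti₀ (by positivity) hsqrt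
      have hc32 : 8/25 ≤ c := by nlinarith [hclb, hc0]
      have hnum2 : x - (x + r₀) ≤ 5/16*σ := by
        have hnum : x - (x + r₀) = Δ/2 - σ*c := by rw [hr₀def]; ring
        rw [hnum, hΔc, div_div, sub_le_iff_le_add, div_le_iff₀ (by positivity : (0:ℝ) < c*2)]
        nlinarith [mul_le_mul_of_nonneg_left hclb hσ0.le,
          mul_le_mul_of_nonneg_left hc32 hσ0.le, hσ0.le, hc0.le]
      have hkey : (x - (x + r₀)) * (Real.sqrt (2*π*(v:ℝ)))⁻¹ ≤ 1/8 := by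
        calc (x - (x + r₀)) * (Real.sqrt (2*π*(v:ℝ)))⁻¹
            ≤ (5/16*σ) * (5/2*σ)⁻¹ :=
              mul_le_mul hnum2 hinv2 (inv_nonneg.2 (Real.sqrt_nonneg _)) (by positivity)
          _ = 1/8 := by
              rw [inv_eq_one_div, mul_one_div, div_eq_iff (by positivity : (5/2:ℝ)*σ ≠ 0)]
              ring
      linarith [hkey]
  have htail : gaussianReal x v B ≤ ENNReal.ofReal δ := by
    rcases lt_or_gt_of_ne ha with hneg | hpos
    · -- a < 0 : B ⊆ Iio (x - r₀)
      have hbΔ : -a ≤ Δ := by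
        have := abs_le.1 hxx'
        linarith [this.1]
      have hsub : B ⊆ Set.Iio (x - r₀) := by
        intro t ht
        rw [hBdef] at ht
        simp only [Set.mem_setOf_eq] at ht
        simp only [Set.mem_Iio]
        have hσc0 : 0 < σ*c := mul_pos hσ0 hc0
        rw [hr₀def]
        nlinarith [ht, hs2, mul_nonneg hσc0.le (by linarith : (0:ℝ) ≤ Δ - (-a)),
          mul_nonneg (by linarith : (0:ℝ) ≤ -a) (by linarith : (0:ℝ) ≤ Δ - (-a))]
      calc gaussianReal x v B ≤ gaussianReal x v (Set.Iio (x - r₀)) := measure_mono hsub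
        _ = gaussianReal x v (Set.Ioi (x + r₀)) := gauss_reflect_apply x v r₀
        _ ≤ _ := hT
    · -- a > 0 : B ⊆ Ioi (x + r₀)
      have haΔ : a ≤ Δ := (abs_le.1 hxx').2
      have hsub : B ⊆ Set.Ioi (x + r₀) := by
        intro t ht
        rw [hBdef] at ht
        simp only [Set.mem_setOf_eq] at ht
        simp only [Set.mem_Ioi]
        have hσc0 : 0 < σ*c := mul_pos hσ0 hc0
        rw [hr₀def]
        nlinarith [ht, hs2, mul_nonneg hσc0.le (by linarith : (0:ℝ) ≤ Δ - a),
          mul_nonneg hpos.le (by linarith : (0:ℝ) ≤ Δ - a)]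
      calc gaussianReal x v B ≤ gaussianReal x v (Set.Ioi (x + r₀)) := measure_mono hsub
        _ ≤ _ := hT
  calc gaussianReal x v S ≤ gaussianReal x v (S \ B) + gaussianReal x v B := hsplit
    _ ≤ ENNReal.ofReal (Real.exp ε) * gaussianReal x' v S + ENNReal.ofReal δ :=
      add_le_add hmain htail
end

section
/- (Composition of an approximate-DP mechanism with a pure-DP mechanism) Let μ₁, ν₁ be probability measures on a measurable space X and μ₂, ν₂ probability measures on a measurable space Y. Suppose that for every measurable S ⊆ X, μ₁(S) ≤ e^{ε₁}·ν₁(S) + δ, and that for every measurable T ⊆ Y, μ₂(T) ≤ e^{ε₂}·ν₂(T). Then the product measures satisfy, for every measurable set W ⊆ X × Y, (μ₁ × μ₂)(W) ≤ e^{ε₁ + ε₂}·(ν₁ × ν₂)(W) + δ. -/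
open MeasureTheory

open scoped ENNReal

/-- Key lemma: an `(ε, δ)` indistinguishability inequality on sets lifts to
lower integrals of functions bounded by `1`, via the layer cake formula. -/
lemma dp_lintegral_le {X : Type*} [MeasurableSpace X]
    (μ ν : Measure X) [IsProbabilityMeasure μ] [IsProbabilityMeasure ν]
    (ε δ : ℝ)
    (h : ∀ S : Set X, MeasurableSet S →
      μ S ≤ ENNReal.ofReal (Real.exp ε) * ν S + ENNReal.ofReal δ)
    (g : X → ℝ≥0∞) (hg : Measurable g) (hg1 : ∀ x, g x ≤ 1) :
    ∫⁻ x, g x ∂μ ≤ ENNReal.ofReal (Real.exp ε) * ∫⁻ x, g x ∂ν + ENNReal.ofReal δ := by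
  set f : X → ℝ := fun x => (g x).toReal with hf
  have hgx : ∀ x, g x ≠ ∞ := fun x => (lt_of_le_of_lt (hg1 x) (by simp)).ne
  have hof : ∀ x, ENNReal.ofReal (f x) = g x := fun x => ENNReal.ofReal_toReal (hgx x)
  have hfm : Measurable f := hg.ennreal_toReal
  have hfnn : 0 ≤ f := fun x => ENNReal.toReal_nonneg
  have hf1 : ∀ x, f x ≤ 1 := fun x => by
    simpa using ENNReal.toReal_mono (by simp) (hg1 x)
  have layer : ∀ (κ : Measure X) [IsProbabilityMeasure κ],
      ∫⁻ x, g x ∂κ = ∫⁻ t in Set.Ioi (0:ℝ), κ {a | t < f a} := by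
    intro κ _
    have e1 : ∫⁻ x, g x ∂κ = ∫⁻ x, ENNReal.ofReal (f x) ∂κ :=
      lintegral_congr fun x => (hof x).symm
    rw [e1]
    exact lintegral_eq_lintegral_meas_lt κ (Filter.Eventually.of_forall hfnn)
      hfm.aemeasurable
  -- restrict to (0, 1]
  have hEmpty : ∀ t : ℝ, 1 < t → {a | t < f a} = (∅ : Set X) := by
    intro t ht
    ext a
    simp only [Set.mem_setOf_eq, Set.mem_empty_iff_false, iff_false, not_lt]
    exact (hf1 a).trans ht.le
  have split : ∀ (κ : Measure X),
      ∫⁻ t in Set.Ioi (0:ℝ), κ {a | t < f a}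
        = ∫⁻ t in Set.Ioc (0:ℝ) 1, κ {a | t < f a} := by
    intro κ
    have hU : Set.Ioi (0:ℝ) = Set.Ioc (0:ℝ) 1 ∪ Set.Ioi (1:ℝ) :=
      (Set.Ioc_union_Ioi_eq_Ioi (by norm_num)).symm
    rw [hU, lintegral_union measurableSet_Ioi Set.Ioc_disjoint_Ioi_same]
    have : ∫⁻ t in Set.Ioi (1:ℝ), κ {a | t < f a} = 0 := by
      rw [setLIntegral_congr_fun measurableSet_Ioi
        (fun t ht => by
          show κ {a | t < f a} = 0
          rw [hEmpty t ht, measure_empty] : Set.EqOn (fun t => κ {a | t < f a})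
            (fun _ => (0:ℝ≥0∞)) (Set.Ioi (1:ℝ)))]
      simp
    rw [this, add_zero]
  calc ∫⁻ x, g x ∂μ = ∫⁻ t in Set.Ioc (0:ℝ) 1, μ {a | t < f a} := by
        rw [layer μ, split μ]
    _ ≤ ∫⁻ t in Set.Ioc (0:ℝ) 1,
          (ENNReal.ofReal (Real.exp ε) * ν {a | t < f a} + ENNReal.ofReal δ) := by
        refine lintegral_mono fun t => h _ ?_
        exact measurableSet_lt measurable_const hfm
    _ = ENNReal.ofReal (Real.exp ε) * (∫⁻ t in Set.Ioc (0:ℝ) 1, ν {a | t < f a})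
          + ENNReal.ofReal δ := by
        have hmeas : Measurable fun t : ℝ => ν {a | t < f a} := by
          refine Antitone.measurable fun s t hst => ?_
          exact measure_mono fun a ha => lt_of_le_of_lt hst ha
        rw [lintegral_add_right _ measurable_const, lintegral_const_mul _ hmeas,
          lintegral_const, Measure.restrict_apply_univ, Real.volume_Ioc]
        norm_num
    _ = ENNReal.ofReal (Real.exp ε) * (∫⁻ x, g x ∂ν) + ENNReal.ofReal δ := by
        rw [layer ν, split ν]
  
/-- **composition of an approximate-DP mechanism with a pure-DP
mechanism.** If `μ₁, ν₁` are `(ε₁, δ)`-indistinguishable and `μ₂, ν₂` are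
`(ε₂, 0)`-indistinguishable, then the product measures are
`(ε₁ + ε₂, δ)`-indistinguishable. -/
theorem dp_composition {X Y : Type*} [MeasurableSpace X] [MeasurableSpace Y]
    (μ₁ ν₁ : Measure X) (μ₂ ν₂ : Measure Y)
    [IsProbabilityMeasure μ₁] [IsProbabilityMeasure ν₁]
    [IsProbabilityMeasure μ₂] [IsProbabilityMeasure ν₂]
    (ε₁ ε₂ δ : ℝ)
    (h₁ : ∀ S : Set X, MeasurableSet S →
      μ₁ S ≤ ENNReal.ofReal (Real.exp ε₁) * ν₁ S + ENNReal.ofReal δ)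
    (h₂ : ∀ T : Set Y, MeasurableSet T →
      μ₂ T ≤ ENNReal.ofReal (Real.exp ε₂) * ν₂ T) :
    ∀ W : Set (X × Y), MeasurableSet W →
      (μ₁.prod μ₂) W
        ≤ ENNReal.ofReal (Real.exp (ε₁ + ε₂)) * (ν₁.prod ν₂) W
          + ENNReal.ofReal δ := by
  intro W hW
  rw [Measure.prod_apply hW, Measure.prod_apply hW]
  set g : X → ℝ≥0∞ :=
    fun x => min (ENNReal.ofReal (Real.exp ε₂) * ν₂ (Prod.mk x ⁻¹' W)) 1 with hgdef
  have hslice : Measurable fun x => ν₂ (Prod.mk x ⁻¹' W) :=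
    measurable_measure_prodMk_left hW
  have hg : Measurable g := (hslice.const_mul _).min measurable_const
  have hg1 : ∀ x, g x ≤ 1 := fun x => min_le_right _ _
  have step1 : ∫⁻ x, μ₂ (Prod.mk x ⁻¹' W) ∂μ₁ ≤ ∫⁻ x, g x ∂μ₁ := by
    refine lintegral_mono fun x => le_min ?_ ?_
    · exact h₂ _ (measurable_prodMk_left hW)
    · exact prob_le_one
  have step2 := dp_lintegral_le μ₁ ν₁ ε₁ δ h₁ g hg hg1
  have step3 : ∫⁻ x, g x ∂ν₁
      ≤ ENNReal.ofReal (Real.exp ε₂) * ∫⁻ x, ν₂ (Prod.mk x ⁻¹' W) ∂ν₁ := by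
    rw [← lintegral_const_mul _ hslice]
    exact lintegral_mono fun x => min_le_left _ _
  calc ∫⁻ x, μ₂ (Prod.mk x ⁻¹' W) ∂μ₁
      ≤ ENNReal.ofReal (Real.exp ε₁) * ∫⁻ x, g x ∂ν₁ + ENNReal.ofReal δ :=
        step1.trans step2
    _ ≤ ENNReal.ofReal (Real.exp ε₁) * (ENNReal.ofReal (Real.exp ε₂)
          * ∫⁻ x, ν₂ (Prod.mk x ⁻¹' W) ∂ν₁) + ENNReal.ofReal δ := by
        gcongr
    _ = ENNReal.ofReal (Real.exp (ε₁ + ε₂))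
          * ∫⁻ x, ν₂ (Prod.mk x ⁻¹' W) ∂ν₁ + ENNReal.ofReal δ := by
        rw [Real.exp_add, ENNReal.ofReal_mul (Real.exp_nonneg _), mul_assoc]
end
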